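/- arXiv:2212.14239 — 2 statements merged into one kernel-verified Lean document; each statement's English description precedes it below -/
import Mathlib

section
/- Let f, g be in B(X,P). Then f and g are Green's R-related in B(X,P) (there exist h, h' in B(X,P) with f = gh and g = fh', i.e. f(x) = h(g(x)) and g(x) = h'(f(x)) for all x) if and only if f and g have the same kernel, i.e. for all x, y in X, f(x) = f(y) holds if and only if g(x) = g(y). -/
open Cardinal

/-- `P : I → Set X` is a partition of `X`: blocks are nonempty, pairwise disjoint,
and cover `X`. -/
def IsPartition {X I : Type*} (P : I → Set X) : Prop :=
  (∀ i, (P i).Nonempty) ∧ Pairwise (Function.onFun Disjoint P) ∧ ∀ x, ∃ i, x ∈ P i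

/-- `f` belongs to `B(X,P)` with character `χ`: `f` maps each block `P i` into the
block `P (χ i)`, and `χ` is a bijection of the index set. -/
def MemB {X I : Type*} (P : I → Set X) (f : X → X) (χ : I → I) : Prop :=
  (∀ i, Set.MapsTo f (P i) (P (χ i))) ∧ Function.Bijective χ

/-- Green's `L` relation on `B(X,P)` (left-to-right composition: `f = hg` means
`f x = g (h x)`). -/
def GreenL {X I : Type*} (P : I → Set X) (f g : X → X) : Prop :=
  ∃ h χh h' χh', MemB P h χh ∧ MemB P h' χh' ∧
    (∀ x, f x = g (h x)) ∧ (∀ x, g x = f (h' x))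

/-- Green's `R` relation on `B(X,P)` (`f = gh` means `f x = h (g x)`). -/
def GreenR {X I : Type*} (P : I → Set X) (f g : X → X) : Prop :=
  ∃ h χh h' χh', MemB P h χh ∧ MemB P h' χh' ∧
    (∀ x, f x = h (g x)) ∧ (∀ x, g x = h' (f x))

/-- Green's `D` relation on `B(X,P)`. -/
def GreenD {X I : Type*} (P : I → Set X) (f g : X → X) : Prop :=
  ∃ k χk, MemB P k χk ∧ GreenL P f k ∧ GreenR P k g

/-- Green's `J` relation on `B(X,P)` (`f = h₁ g h₂` means `f x = h₂ (g (h₁ x))`). -/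
def GreenJ {X I : Type*} (P : I → Set X) (f g : X → X) : Prop :=
  (∃ h1 χ1 h2 χ2, MemB P h1 χ1 ∧ MemB P h2 χ2 ∧ ∀ x, f x = h2 (g (h1 x))) ∧
  (∃ h3 χ3 h4 χ4, MemB P h3 χ3 ∧ MemB P h4 χ4 ∧ ∀ x, g x = h4 (f (h3 x)))

/-!
When `ker g ⊆ ker f`, a factorisation `f = gh` forces `h` on the image of `g`
(`h (g x) = f x`); outside the image it may send each point of a block `X_j` anywhere in the
block `X_{χ_f (χ_g⁻¹ j)}`, and then `h` preserves the partition with the bijective character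
`χ_f ∘ χ_g⁻¹`.
-/

namespace IsPartition

variable {X I : Type*} {P : I → Set X}

theorem eq_of_mem (hP : IsPartition P) {x : X} {i j : I} (hi : x ∈ P i) (hj : x ∈ P j) :
    i = j :=
  hP.2.1.eq (Set.not_disjoint_iff.2 ⟨x, hi, hj⟩)

noncomputable def index (hP : IsPartition P) (x : X) : I :=
  (hP.2.2 x).choose

theorem mem_index (hP : IsPartition P) (x : X) : x ∈ P (hP.index x) :=
  (hP.2.2 x).choose_spec

end IsPartition

theorem exists_memB_comp_eq_of_factorsThrough {X I : Type*} {P : I → Set X}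
    (hP : IsPartition P) {f g : X → X} {χf χg : I → I} (hf : MemB P f χf) (hg : MemB P g χg)
    (hker : Function.FactorsThrough f g) :
    ∃ h χh, MemB P h χh ∧ ∀ x, f x = h (g x) := by
  let χgInv := (Equiv.ofBijective χg hg.2).symm
  have hχgInv : ∀ i, χgInv (χg i) = i := (Equiv.ofBijective χg hg.2).symm_apply_apply
  let χh := χf ∘ χgInv
  let outside : X → X := fun y => (hP.1 (χh (hP.index y))).some
  refine ⟨Function.extend g f outside, χh, ⟨?_, hf.2.comp χgInv.bijective⟩,
    fun x => (hker.extend_apply outside x).symm⟩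
  intro j y hy
  by_cases hrange : ∃ x, g x = y
  · obtain ⟨x, rfl⟩ := hrange
    have hj : χg (hP.index x) = j := hP.eq_of_mem (hg.1 _ (hP.mem_index x)) hy
    rw [hker.extend_apply, ← hj]
    simpa only [χh, Function.comp_apply, hχgInv] using hf.1 _ (hP.mem_index x)
  · rw [Function.extend_apply' _ _ _ hrange, ← hP.eq_of_mem (hP.mem_index y) hy]
    exact (hP.1 _).some_mem

theorem ker_iff_of_greenR {X I : Type*} {P : I → Set X} {f g : X → X} (hR : GreenR P f g)
    (x y : X) : f x = f y ↔ g x = g y := by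
  obtain ⟨h, -, h', -, -, -, hfh, hgh'⟩ := hR
  exact ⟨fun hxy => by rw [hgh' x, hgh' y, hxy], fun hxy => by rw [hfh x, hfh y, hxy]⟩

theorem R_iff_general {X I : Type*} (P : I → Set X) (hP : IsPartition P)
    (f g : X → X) (χf χg : I → I) (hf : MemB P f χf) (hg : MemB P g χg) :
    GreenR P f g ↔ ∀ x y : X, f x = f y ↔ g x = g y := by
  refine ⟨ker_iff_of_greenR, fun hker => ?_⟩
  obtain ⟨h, χh, hh, hfh⟩ :=
    exists_memB_comp_eq_of_factorsThrough hP hf hg fun x y hxy => (hker x y).2 hxy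
  obtain ⟨h', χh', hh', hgh'⟩ :=
    exists_memB_comp_eq_of_factorsThrough hP hg hf fun x y hxy => (hker x y).1 hxy
  exact ⟨h, χh, h', χh', hh, hh', hfh, hgh'⟩

/-- `f R g` in `B(X,P)` iff `f` and `g` have the same kernel. -/
theorem R_iff {X I : Type*} [Nonempty X] (P : I → Set X) (hP : IsPartition P)
    (f g : X → X) (χf χg : I → I) (hf : MemB P f χf) (hg : MemB P g χg) :
    GreenR P f g ↔ ∀ x y : X, f x = f y ↔ g x = g y :=
  R_iff_general P hP f g χf χg hf hg
end

section
/- Green's relations D and J coincide on B(X,P) (for all f, g in B(X,P), f D g if and only if f J g) if and only if the set {i in I : |X_i| >= 3} is finite. -/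
open Cardinal

/-!
Write `#(f '' P i)` for the rank of `f` on the block `P i`. A `D`-class is determined by the
rank function up to a permutation of `I`, while `f ≤_J g` holds as soon as the ranks of `f` are
dominated by those of `g` along a permutation. When only finitely many blocks have size `≥ 3`,
mutual domination forces equality up to a permutation: on the finitely many ranks `≥ 3` the
dominations are tight, rank `2` is squeezed between, and rank `1` is pulled back along the inverse
permutations. With infinitely many such blocks, a Hilbert-hotel shift lets a map of ranks
`3, 3, 3, …` dominate one that has an extra block of rank `2`, so the two are `J`- but not
`D`-related.
-/

open Function Set

section Domination

variable {ι β : Type*} [PartialOrder β] {r s : ι → β} {π π' : ι → ι}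

theorem image_setOf_le_eq_of_le_comp (hπ : Injective π) (hπ' : Injective π')
    (hr : ∀ i, r i ≤ s (π i)) (hs : ∀ j, s j ≤ r (π' j)) {c : β} (hc : {i | c ≤ r i}.Finite) :
    π '' {i | c ≤ r i} = {j | c ≤ s j} := by
  have hsub : π' '' {j | c ≤ s j} ⊆ {i | c ≤ r i} := by
    rintro _ ⟨j, hj, rfl⟩
    exact le_trans hj (hs j)
  have hfin : {j | c ≤ s j}.Finite := Finite.of_finite_image (hc.subset hsub) hπ'.injOn
  refine eq_of_subset_of_ncard_le ?_ ?_ hfin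
  · rintro _ ⟨i, hi, rfl⟩
    exact le_trans hi (hr i)
  · rw [ncard_image_of_injective _ hπ, ← ncard_image_of_injective _ hπ']
    exact ncard_le_ncard hsub hc

theorem apply_eq_of_le_comp (hπ : Injective π) (hπ' : Injective π')
    (hr : ∀ i, r i ≤ s (π i)) (hs : ∀ j, s j ≤ r (π' j)) {t : β} (ht : {i | t ≤ r i}.Finite)
    {i : ι} (hi : t ≤ r i) : s (π i) = r i := by
  have hc : {i' | s (π i) ≤ r i'}.Finite := ht.subset fun i' h => (hi.trans (hr i)).trans h
  obtain ⟨i', hi', he⟩ : π i ∈ π '' {i' | s (π i) ≤ r i'} := by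
    rw [image_setOf_le_eq_of_le_comp hπ hπ' hr hs hc]
    exact le_rfl
  exact le_antisymm (hπ he ▸ hi') (hr i)

end Domination

theorem Cardinal.eq_two_of_one_lt_of_lt_three {c : Cardinal} (h1 : 1 < c) (h3 : c < 3) :
    c = 2 := by
  obtain ⟨n, rfl⟩ := lt_aleph0.1 (h3.trans natCast_lt_aleph0)
  norm_cast at h1 h3 ⊢
  omega

section Ranks

variable {ι : Type*} {r s : ι → Cardinal} {π π' : Equiv.Perm ι}

theorem mk_fiber_le_of_le_comp (hs1 : ∀ j, 1 ≤ s j) (hr : ∀ i, r i ≤ s (π i))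
    (hs : ∀ j, s j ≤ r (π' j)) (hfin : {i | 3 ≤ r i}.Finite) (c : Cardinal) :
    #{i // r i = c} ≤ #{j // s j = c} := by
  suffices ∃ σ : ι → ι, Injective σ ∧ ∀ i, r i = c → s (σ i) = c by
    obtain ⟨σ, hσ, hσc⟩ := this
    exact mk_le_of_injective (Subtype.map_injective hσc hσ)
  rcases le_or_gt c 1 with hc1 | hc1
  · refine ⟨π'.symm, π'.symm.injective, fun i hi => le_antisymm ?_ (hc1.trans (hs1 _))⟩
    simpa [hi] using hs (π'.symm i)
  refine ⟨π, π.injective, fun i hi => ?_⟩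
  rcases le_or_gt 3 c with hc3 | hc3
  · rw [apply_eq_of_le_comp π.injective π'.injective hr hs hfin (hi ▸ hc3), hi]
  -- the value `2` is sandwiched: `s (π i) ≥ 3` would force `r i ≥ 3`
  have hlt : s (π i) < 3 := by
    by_contra! h
    have h' : π i ∈ {j | 3 ≤ s j} := h
    rw [← image_setOf_le_eq_of_le_comp π.injective π'.injective hr hs hfin] at h'
    obtain ⟨i', hi', he⟩ := h'
    obtain rfl := π.injective he
    exact hc3.not_ge (hi ▸ hi')
  rw [Cardinal.eq_two_of_one_lt_of_lt_three (hc1.trans_le (hi ▸ hr i)) hlt,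
    Cardinal.eq_two_of_one_lt_of_lt_three hc1 hc3]

theorem exists_perm_comp_eq_of_le_comp (hr1 : ∀ i, 1 ≤ r i) (hs1 : ∀ j, 1 ≤ s j)
    (hr : ∀ i, r i ≤ s (π i)) (hs : ∀ j, s j ≤ r (π' j)) (hfin : {i | 3 ≤ r i}.Finite) :
    ∃ τ : Equiv.Perm ι, ∀ i, s (τ i) = r i := by
  have hfin' : {j | 3 ≤ s j}.Finite := by
    rw [← image_setOf_le_eq_of_le_comp π.injective π'.injective hr hs hfin]
    exact hfin.image π
  have hfiber : ∀ c, #{i // r i = c} = #{j // s j = c} := fun c =>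
    le_antisymm (mk_fiber_le_of_le_comp hs1 hr hs hfin c) (mk_fiber_le_of_le_comp hr1 hs hr hfin' c)
  exact ⟨Equiv.ofFiberEquiv fun c => (Cardinal.eq.1 (hfiber c)).some, Equiv.ofFiberEquiv_map _⟩

end Ranks

section BlockMaps

variable {X I : Type*} {P : I → Set X}

theorem IsPartition.eq_of_mem_s15 (hP : IsPartition P) {x : X} {i j : I} (hi : x ∈ P i)
    (hj : x ∈ P j) : i = j := by
  by_contra h
  exact disjoint_left.mp (hP.2.1 h) hi hj

namespace MemB

theorem id : MemB P id id := ⟨fun _ => mapsTo_id _, bijective_id⟩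

theorem comp {h g : X → X} {χh χg : I → I} (hh : MemB P h χh) (hg : MemB P g χg) :
    MemB P (g ∘ h) (χg ∘ χh) :=
  ⟨fun i => (hg.1 _).comp (hh.1 i), hg.2.comp hh.2⟩

theorem eq_of_apply_eq (hP : IsPartition P) {m : X → X} {χ : I → I} (hm : MemB P m χ)
    {x y : X} {i j : I} (hx : x ∈ P i) (hy : y ∈ P j) (h : m x = m y) : i = j :=
  hm.2.1 (hP.eq_of_mem_s15 (hm.1 i hx) (h ▸ hm.1 j hy))

theorem char_eq_of_eq_comp (hP : IsPartition P) {f h k : X → X} {χf χh χk : I → I}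
    (hf : MemB P f χf) (hh : MemB P h χh) (hk : MemB P k χk) (e : ∀ x, f x = k (h x)) (i : I) :
    χk (χh i) = χf i := by
  obtain ⟨x, hx⟩ := hP.1 i
  exact hP.eq_of_mem_s15 (e x ▸ hk.1 _ (hh.1 i hx)) (hf.1 i hx)

end MemB

theorem exists_memB_of_forall {σ : I → I} (hσ : Bijective σ) {Q : X → X → Prop}
    (h : ∀ x, ∃ y, (∀ i, x ∈ P i → y ∈ P (σ i)) ∧ Q x y) :
    ∃ k, MemB P k σ ∧ ∀ x, Q x (k x) := by
  choose k hk hQ using h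
  exact ⟨k, ⟨fun i x hx => hk x i hx, hσ⟩, hQ⟩

theorem exists_memB_comp_eq_of_image_subset (hP : IsPartition P) {f k : X → X} {σ : I → I}
    (hσ : Bijective σ) (hsub : ∀ i, f '' P i ⊆ k '' P (σ i)) :
    ∃ h, MemB P h σ ∧ ∀ x, f x = k (h x) := by
  refine exists_memB_of_forall (Q := fun x y => f x = k y) hσ fun x => ?_
  obtain ⟨i, hi⟩ := hP.2.2 x
  obtain ⟨y, hy, hky⟩ := hsub i (mem_image_of_mem f hi)
  exact ⟨y, fun j hj => hP.eq_of_mem_s15 hi hj ▸ hy, hky.symm⟩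

theorem exists_memB_eq_comp_of_ker_le (hP : IsPartition P) {g k : X → X} {χg χk : I → I}
    (hg : MemB P g χg) (hk : MemB P k χk) (hker : ∀ x y, g x = g y → k x = k y) :
    ∃ a χa, MemB P a χa ∧ ∀ x, k x = a (g x) := by
  set e := Equiv.ofBijective χg hg.2
  obtain ⟨a, ha, hak⟩ := exists_memB_of_forall (P := P) (hk.2.comp e.symm.bijective)
    (Q := fun y z => ∀ x, g x = y → k x = z) fun y => by
      obtain ⟨j, hj⟩ := hP.2.2 y
      by_cases hy : ∃ x, g x = y
      · obtain ⟨x, rfl⟩ := hy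
        obtain ⟨i, hi⟩ := hP.2.2 x
        refine ⟨k x, fun j' hj' => ?_, fun x' hx' => hker x' x hx'⟩
        obtain rfl := hP.eq_of_mem_s15 (hg.1 i hi) hj'
        simpa [e] using hk.1 i hi
      · refine ⟨(hP.1 (χk (e.symm j))).some, fun j' hj' => ?_, fun x hx => (hy ⟨x, hx⟩).elim⟩
        exact hP.eq_of_mem_s15 hj hj' ▸ (hP.1 _).some_mem
  exact ⟨a, _, ha, fun x => hak (g x) x rfl⟩

theorem mk_image_le_of_eq_comp {f g h a : X → X} {χ : I → I} (hh : MemB P h χ)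
    (e : ∀ x, f x = a (g (h x))) (i : I) : #(f '' P i) ≤ #(g '' P (χ i)) := by
  have hsub : f '' P i ⊆ a '' (g '' P (χ i)) := by
    rintro _ ⟨x, hx, rfl⟩
    exact ⟨g (h x), mem_image_of_mem g (hh.1 i hx), (e x).symm⟩
  exact (mk_le_mk_of_subset hsub).trans mk_image_le

theorem one_le_mk_image (hP : IsPartition P) (f : X → X) (i : I) : 1 ≤ #(f '' P i) :=
  Cardinal.one_le_iff_ne_zero.2 (mk_ne_zero_iff.2 ((hP.1 i).image f).to_subtype)

theorem exists_factor_of_mk_image_le (hP : IsPartition P) {f g : X → X} {χf χg π : I → I}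
    (hf : MemB P f χf) (hg : MemB P g χg) (hπ : Bijective π)
    (hle : ∀ i, #(f '' P i) ≤ #(g '' P (π i))) :
    ∃ h1 χ1 h2 χ2, MemB P h1 χ1 ∧ MemB P h2 χ2 ∧ ∀ x, f x = h2 (g (h1 x)) := by
  have ι : ∀ i, f '' P i ↪ g '' P (π i) := fun i => ((Cardinal.le_def _ _).mp (hle i)).some
  obtain ⟨h1, hh1, hgh1⟩ := exists_memB_of_forall (P := P) hπ
    (Q := fun x y => ∀ i (hx : x ∈ P i), g y = ι i ⟨f x, mem_image_of_mem f hx⟩) fun x => by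
      obtain ⟨i, hi⟩ := hP.2.2 x
      obtain ⟨y, hy, hgy⟩ := (ι i ⟨f x, mem_image_of_mem f hi⟩).2
      refine ⟨y, fun j hj => hP.eq_of_mem_s15 hi hj ▸ hy, fun j hj => ?_⟩
      obtain rfl := hP.eq_of_mem_s15 hi hj
      exact hgy
  have hker : ∀ x y, g (h1 x) = g (h1 y) → f x = f y := by
    intro x y hxy
    obtain ⟨i, hi⟩ := hP.2.2 x
    obtain ⟨j, hj⟩ := hP.2.2 y
    obtain rfl := (hh1.comp hg).eq_of_apply_eq hP hi hj hxy
    rw [hgh1 x i hi, hgh1 y i hj] at hxy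
    exact congrArg Subtype.val ((ι i).injective (Subtype.ext hxy))
  obtain ⟨h2, χ2, hh2, e⟩ := exists_memB_eq_comp_of_ker_le hP (hh1.comp hg) hf hker
  exact ⟨h1, π, h2, χ2, hh1, hh2, e⟩

theorem GreenD.greenJ {f g : X → X} (hD : GreenD P f g) : GreenJ P f g := by
  obtain ⟨k, -, -, ⟨h, χh, h', χh', hh, hh', e1, e2⟩, ⟨a, χa, a', χa', ha, ha', e3, e4⟩⟩ := hD
  exact ⟨⟨h, χh, a, χa, hh, ha, fun x => by rw [e1, e3]⟩,
    ⟨h', χh', a', χa', hh', ha', fun x => by rw [e4, e2]⟩⟩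

theorem GreenD.exists_mk_image_eq (hP : IsPartition P) {f g : X → X} {χf : I → I}
    (hf : MemB P f χf) (hD : GreenD P f g) :
    ∃ τ : I → I, Bijective τ ∧ ∀ i, #(f '' P i) = #(g '' P (τ i)) := by
  obtain ⟨k, χk, hk, ⟨h, χh, h', χh', hh, hh', e1, e2⟩, ⟨a, χa, a', χa', -, -, e3, e4⟩⟩ := hD
  have hinv : ∀ i, χh' (χh i) = i := fun i => hf.2.1 <| by
    rw [MemB.char_eq_of_eq_comp hP hk hh' hf e2, MemB.char_eq_of_eq_comp hP hf hh hk e1]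
  have hkg : ∀ j, #(k '' P j) = #(g '' P j) := fun j =>
    le_antisymm (mk_image_le_of_eq_comp (h := id) MemB.id e3 j)
      (mk_image_le_of_eq_comp (h := id) MemB.id e4 j)
  refine ⟨χh, hh.2, fun i => le_antisymm ?_ ?_⟩
  · exact (hkg (χh i)) ▸ mk_image_le_of_eq_comp (a := id) hh e1 i
  · calc #(g '' P (χh i)) = #(k '' P (χh i)) := (hkg _).symm
      _ ≤ #(f '' P (χh' (χh i))) := mk_image_le_of_eq_comp (a := id) hh' e2 _
      _ = #(f '' P i) := by rw [hinv]

theorem greenD_of_mk_image_eq (hP : IsPartition P) {f g : X → X} {χf χg : I → I}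
    (hf : MemB P f χf) (hg : MemB P g χg) (τ : I ≃ I)
    (heq : ∀ i, #(f '' P i) = #(g '' P (τ i))) : GreenD P f g := by
  have ψ : ∀ i, f '' P i ≃ g '' P (τ i) := fun i => (Cardinal.eq.mp (heq i)).some
  have hcover : ∀ x, ∃ i, x ∈ P (τ i) := fun x => τ.surjective.exists.1 (hP.2.2 x)
  -- `k` has the kernel of `g` and, up to `τ`, the block images of `f`.
  obtain ⟨k, hk, hkψ⟩ := exists_memB_of_forall (P := P) (hf.2.comp τ.symm.bijective)
    (Q := fun x z => ∀ i (hx : x ∈ P (τ i)), z = (ψ i).symm ⟨g x, mem_image_of_mem g hx⟩)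
    fun x => by
      obtain ⟨i, hx⟩ := hcover x
      refine ⟨(ψ i).symm ⟨g x, mem_image_of_mem g hx⟩, fun j hj => ?_, fun i' hi' => ?_⟩
      · obtain rfl := hP.eq_of_mem_s15 hx hj
        simpa using (hf.1 i).image_subset ((ψ i).symm _).2
      · obtain rfl := τ.injective (hP.eq_of_mem_s15 hx hi')
        rfl
  have himage : ∀ i, k '' P (τ i) = f '' P i := by
    refine fun i => Subset.antisymm ?_ fun y hy => ?_
    · rintro _ ⟨x, hx, rfl⟩
      exact hkψ x i hx ▸ ((ψ i).symm _).2
    · obtain ⟨x, hx, hgx⟩ := (ψ i ⟨y, hy⟩).2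
      refine ⟨x, hx, ?_⟩
      rw [hkψ x i hx]
      simp [hgx]
  have hker : ∀ x y, g x = g y ↔ k x = k y := by
    intro x y
    obtain ⟨i, hx⟩ := hcover x
    obtain ⟨i', hy⟩ := hcover y
    rw [hkψ x i hx, hkψ y i' hy]
    constructor
    · intro hxy
      obtain rfl := τ.injective (hg.eq_of_apply_eq hP hx hy hxy)
      simp [hxy]
    · intro hxy
      obtain rfl := τ.injective (hk.eq_of_apply_eq hP hx hy (by rw [hkψ x i hx, hkψ y i' hy, hxy]))
      exact congrArg Subtype.val ((ψ i).symm.injective (Subtype.ext hxy))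
  obtain ⟨h, hh, e1⟩ := exists_memB_comp_eq_of_image_subset hP τ.bijective
    fun i => (himage i).symm.subset
  obtain ⟨h', hh', e2⟩ := exists_memB_comp_eq_of_image_subset (f := k) hP τ.symm.bijective
    fun j => by rw [← himage, τ.apply_symm_apply]
  obtain ⟨a, χa, ha, e3⟩ := exists_memB_eq_comp_of_ker_le hP hg hk fun x y => (hker x y).1
  obtain ⟨a', χa', ha', e4⟩ := exists_memB_eq_comp_of_ker_le hP hk hg fun x y => (hker x y).2
  exact ⟨k, _, hk, ⟨h, τ, h', τ.symm, hh, hh', e1, e2⟩, ⟨a, χa, a', χa', ha, ha', e3, e4⟩⟩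

theorem exists_memB_mk_image_eq (hP : IsPartition P) {ρ : I → Cardinal} (hρ1 : ∀ i, 1 ≤ ρ i)
    (hρ : ∀ i, ρ i ≤ #(P i)) : ∃ f, MemB P f id ∧ ∀ i, #(f '' P i) = ρ i := by
  choose T hTP hT using fun i => le_mk_iff_exists_subset.1 (hρ i)
  have hTne : ∀ i, (T i).Nonempty := fun i => nonempty_coe_sort.1 <|
    mk_ne_zero_iff.1 (Cardinal.one_le_iff_ne_zero.1 (hT i ▸ hρ1 i))
  -- a blockwise retraction onto `T`
  obtain ⟨f, hf, hfT⟩ := exists_memB_of_forall (P := P) bijective_id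
    (Q := fun x y => ∀ i, x ∈ P i → y ∈ T i ∧ (x ∈ T i → y = x)) fun x => by
      obtain ⟨i, hi⟩ := hP.2.2 x
      obtain ⟨y, hy, hyx⟩ : ∃ y ∈ T i, x ∈ T i → y = x := by
        by_cases hx : x ∈ T i
        exacts [⟨x, hx, fun _ => rfl⟩, ⟨_, (hTne i).some_mem, fun h => absurd h hx⟩]
      refine ⟨y, fun j hj => ?_, fun j hj => ?_⟩ <;> obtain rfl := hP.eq_of_mem_s15 hi hj
      exacts [hTP i hy, ⟨hy, hyx⟩]
  refine ⟨f, hf, fun i => ?_⟩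
  have himage : f '' P i = T i := by
    refine Subset.antisymm ?_ fun x hx => ⟨x, hTP i hx, (hfT x i (hTP i hx)).2 hx⟩
    rintro _ ⟨x, hx, rfl⟩
    exact (hfT x i hx).1
  rw [himage, hT]

theorem not_greenD_of_mk_image_ne (hP : IsPartition P) {f g : X → X} {χf : I → I}
    (hf : MemB P f χf) {j : I} (hj : ∀ i, #(f '' P i) ≠ #(g '' P j)) : ¬ GreenD P f g := by
  intro hD
  obtain ⟨τ, hτ, hfg⟩ := hD.exists_mk_image_eq hP hf
  obtain ⟨i, rfl⟩ := hτ.2 j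
  exact hj i (hfg i)

theorem exists_greenJ_not_greenD_of_embedding (hP : IsPartition P) (C : ℤ ↪ I)
    (hC : ∀ n, 3 ≤ #(P (C n))) :
    ∃ f χf g χg, MemB P f χf ∧ MemB P g χg ∧ GreenJ P f g ∧ ¬ GreenD P f g := by
  classical
  -- `f` has rank 3 on the blocks `C n` with `n ≥ 0` and rank 1 elsewhere; `g` differs from `f`
  -- only by rank 2 on `C 0`. The shift `C n ↦ C (n + 1)` witnesses `f ≤_J g`.
  let ρf : I → Cardinal := fun i => if ∃ n, 0 ≤ n ∧ C n = i then 3 else 1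
  let ρg : I → Cardinal := fun i => if i = C 0 then 2 else ρf i
  have hρg1 : ∀ i, 1 ≤ ρg i := fun i => by
    simp only [ρg, ρf]; split_ifs <;> norm_num
  have hgf : ∀ i, ρg i ≤ ρf i := fun i => by
    simp only [ρg]; split_ifs with h
    · simp only [ρf, if_pos (⟨0, le_rfl, h.symm⟩ : ∃ n, 0 ≤ n ∧ C n = i)]
      norm_num
    · exact le_rfl
  have hρf_le : ∀ i, ρf i ≤ #(P i) := fun i => by
    simp only [ρf]; split_ifs with h
    · obtain ⟨n, -, rfl⟩ := h
      exact hC n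
    · exact Cardinal.one_le_iff_ne_zero.2 (mk_ne_zero_iff.2 (hP.1 i).to_subtype)
  obtain ⟨f, hf, hfρ⟩ :=
    exists_memB_mk_image_eq hP (fun i => (hρg1 i).trans (hgf i)) hρf_le
  obtain ⟨g, hg, hgρ⟩ :=
    exists_memB_mk_image_eq hP hρg1 fun i => (hgf i).trans (hρf_le i)
  let π : Equiv.Perm I := (Equiv.addRight 1).viaEmbedding C
  have hfg : ∀ i, ρf i ≤ ρg (π i) := fun i => by
    by_cases h : ∃ n, 0 ≤ n ∧ C n = i
    · obtain ⟨n, hn, rfl⟩ := h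
      have hπ : π (C n) = C (n + 1) := Equiv.Perm.viaEmbedding_apply _ _ _
      have hne : C (n + 1) ≠ C 0 := fun he => by have := C.injective he; omega
      simp only [ρg, ρf, hπ, hne, if_false]
      rw [if_pos ⟨n, hn, rfl⟩, if_pos ⟨n + 1, by omega, rfl⟩]
    · simp only [ρf, if_neg h]
      exact hρg1 _
  refine ⟨f, _, g, _, hf, hg, ⟨?_, ?_⟩, not_greenD_of_mk_image_ne hP hf (j := C 0) fun i => ?_⟩
  · exact exists_factor_of_mk_image_le hP hf hg π.bijective fun i => by rw [hfρ, hgρ]; exact hfg i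
  · exact exists_factor_of_mk_image_le hP hg hf bijective_id fun i => by rw [hfρ, hgρ]; exact hgf i
  rw [hfρ, hgρ]
  simp only [ρf, ρg, if_true]
  split_ifs <;> norm_num

theorem exists_greenJ_not_greenD (hP : IsPartition P) (hinf : {i | 3 ≤ #(P i)}.Infinite) :
    ∃ f χf g χg, MemB P f χf ∧ MemB P g χg ∧ GreenJ P f g ∧ ¬ GreenD P f g := by
  have := hinf.to_subtype
  let e : ℤ ↪ {i | 3 ≤ #(P i)} := Equiv.intEquivNat.toEmbedding.trans (Infinite.natEmbedding _)
  exact exists_greenJ_not_greenD_of_embedding hP (e.trans (Embedding.subtype _)) fun n => (e n).2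

end BlockMaps

theorem D_eq_J_iff_general {X I : Type*} (P : I → Set X) (hP : IsPartition P) :
    (∀ f χf g χg, MemB P f χf → MemB P g χg → (GreenD P f g ↔ GreenJ P f g)) ↔
      {i : I | 3 ≤ Cardinal.mk ↥(P i)}.Finite := by
  refine ⟨fun hDJ => ?_, fun hfin f χf g χg hf hg => ⟨GreenD.greenJ, fun hJ => ?_⟩⟩
  · by_contra hinf
    obtain ⟨f, χf, g, χg, hf, hg, hJ, hD⟩ := exists_greenJ_not_greenD hP hinf
    exact hD ((hDJ f χf g χg hf hg).2 hJ)
  · obtain ⟨⟨h1, χ1, _, _, hh1, -, e1⟩, ⟨h2, χ2, _, _, hh2, -, e2⟩⟩ := hJ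
    obtain ⟨τ, hτ⟩ := exists_perm_comp_eq_of_le_comp (π := Equiv.ofBijective χ1 hh1.2)
      (π' := Equiv.ofBijective χ2 hh2.2) (one_le_mk_image hP f) (one_le_mk_image hP g)
      (mk_image_le_of_eq_comp hh1 e1) (mk_image_le_of_eq_comp hh2 e2)
      (hfin.subset fun i (hi : 3 ≤ #(f '' P i)) => show 3 ≤ #(P i) from hi.trans mk_image_le)
    exact greenD_of_mk_image_eq hP hf hg τ fun i => (hτ i).symm

/-- `D = J` on `B(X,P)` iff only finitely many blocks of `P` have at least three
elements. -/
theorem D_eq_J_iff {X I : Type*} [Nonempty X] (P : I → Set X) (hP : IsPartition P) :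
    (∀ f χf g χg, MemB P f χf → MemB P g χg → (GreenD P f g ↔ GreenJ P f g)) ↔
      {i : I | 3 ≤ Cardinal.mk ↥(P i)}.Finite :=
  D_eq_J_iff_general P hP
end
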